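/- Suppose every relation in R has the form Z₁ a₁ = a₂ Z₂ with Z₁, Z₂ ∈ 𝒵 and a₁, a₂ ∈ A₁, and that the presented group ⟨F(𝒵) * A₁ | R⟩ arises from a set of valid relations in an overgroup as above (so that A₁ embeds into it). Then by Tietze transformations that eliminate, for each relation Z₁ a₁ = a₂ Z₂ with Z₁ ≠ Z₂, the generator Z₂ by substituting a₂^{−1} Z₁ a₁, the group ⟨F(𝒵) * A₁ | R⟩ is isomorphic to a multiple HNN-extension ⟨A₁, Z₁, …, Zₘ | Z_i^{−1} a Z_i = ψ_i(a) (1 ≤ i ≤ m, a ∈ dom(ψ_i))⟩ of the finite group A₁, where each ψ_i is a partial automorphism of A₁, i.e., an isomorphism between two subgroups of A₁. -/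

import Mathlib

/-!
Multiple HNN-extension `G = ⟨H, t₁, …, tₙ | tᵢ⁻¹ a tᵢ = φᵢ(a) (a ∈ Aᵢ)⟩`, presented
as a `PresentedGroup` on the alphabet `H ⊕ ι`.
-/

/-- Relators of the multiple HNN-extension presentation. -/
def hnnRels {H : Type*} [Group H] {ι : Type*} (A B : ι → Subgroup H)
    (φ : ∀ i, A i ≃* B i) : Set (FreeGroup (H ⊕ ι)) :=
  {r | ∃ h₁ h₂ : H, r = FreeGroup.of (Sum.inl h₁) * FreeGroup.of (Sum.inl h₂) *
        (FreeGroup.of (Sum.inl (h₁ * h₂)))⁻¹} ∪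
  {r | ∃ (i : ι) (a : A i), r = (FreeGroup.of (Sum.inr i))⁻¹ *
        FreeGroup.of (Sum.inl (a : H)) * FreeGroup.of (Sum.inr i) *
        (FreeGroup.of (Sum.inl ((φ i a : B i) : H)))⁻¹}

/-- The multiple HNN-extension of `H`. -/
abbrev MHNN {H : Type*} [Group H] {ι : Type*} (A B : ι → Subgroup H)
    (φ : ∀ i, A i ≃* B i) :=
  PresentedGroup (hnnRels A B φ)

/-- Canonical generators: `Sum.inl h` for `h ∈ H`, `Sum.inr i` for the stable letter `tᵢ`. -/
def gen {H : Type*} [Group H] {ι : Type*} (A B : ι → Subgroup H)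
    (φ : ∀ i, A i ≃* B i) (x : H ⊕ ι) : MHNN A B φ :=
  PresentedGroup.of x

/-- The element represented by the word `u₀ t_{idx 0}^{e 0} u₁ ⋯ t_{idx (ℓ-1)}^{e (ℓ-1)} u_ℓ`. -/
def wordProd {H : Type*} [Group H] {ι : Type*} (A B : ι → Subgroup H)
    (φ : ∀ i, A i ≃* B i) (ℓ : ℕ) (u : ℕ → H) (idx : ℕ → ι) (e : ℕ → ℤ) :
    MHNN A B φ :=
  gen A B φ (Sum.inl (u 0)) *
    ((List.range ℓ).map fun k =>
      gen A B φ (Sum.inr (idx k)) ^ e k * gen A B φ (Sum.inl (u (k + 1)))).prod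

/-- `side A B i e` is `A i (e)`, i.e. `A i` if `e = 1` and `B i` if `e = -1`. -/
def side {H : Type*} [Group H] {ι : Type*} (A B : ι → Subgroup H) (i : ι) (e : ℤ) :
    Subgroup H :=
  if e = 1 then A i else B i

/-- The word is reduced: exponents are `±1`, no factor `tᵢ^{-α} w tᵢ^{α}` with `w ∈ A i (α)`. -/
def ReducedWord {H : Type*} [Group H] {ι : Type*} (A B : ι → Subgroup H)
    (ℓ : ℕ) (u : ℕ → H) (idx : ℕ → ι) (e : ℕ → ℤ) : Prop :=
  (∀ k < ℓ, e k = 1 ∨ e k = -1) ∧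
  ∀ k, k + 1 < ℓ → idx k = idx (k + 1) → e k = -e (k + 1) →
    u (k + 1) ∉ side A B (idx k) (e (k + 1))


section

variable (L : Type*) [Group L] (A₁ : Subgroup L) [Finite A₁]
variable (𝒵 : Type*) [Finite 𝒵]

/-- The relators of a set `R` of relations of conjugation type `Z₁ a₁ = a₂ Z₂`
(`Z₁, Z₂ ∈ 𝒵`, `a₁, a₂ ∈ A₁`), inside the free product `F(𝒵) ∗ A₁`. -/
def conjRels (R : Set (𝒵 × A₁ × A₁ × 𝒵)) :
    Set (Monoid.Coprod (FreeGroup 𝒵) A₁) :=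
  {r | ∃ t ∈ R,
    r = Monoid.Coprod.inl (FreeGroup.of t.1) * Monoid.Coprod.inr t.2.1 *
        (Monoid.Coprod.inr t.2.2.1 * Monoid.Coprod.inl (FreeGroup.of t.2.2.2))⁻¹}

end

/-!
Two letters linked by a relation `Z₁ a₁ = a₂ Z₂` agree up to factors from `A₁` on either side,
so after choosing a representative `rep i` in each class of the equivalence relation generated
by the relations, every letter becomes `α Z * rep (cl Z) * β Z` in the presented group `G`, and
each relation becomes `(rep i)⁻¹ d (rep i) = c` with `c, d ∈ A₁`. Since the relations hold in
`L`, the group `G` maps to `L` and `A₁` embeds into `G`; hence conjugation by `rep i` is a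
partial automorphism of `A₁`. Taking its whole domain costs nothing, since its defining relations
already hold in `G`. The maps `a ↦ a`, `Z ↦ α Z tᵢ β Z` from `G` to the resulting HNN-extension
and `tᵢ ↦ rep i` back are mutually inverse.
-/

theorem mul_mul_eq_mul_mul_iff_conj {G : Type*} [Group G] (α₁ α₂ β₁ β₂ u a₁ a₂ : G) :
    α₁ * u * β₁ * a₁ = a₂ * (α₂ * u * β₂) ↔ u⁻¹ * (α₁⁻¹ * a₂ * α₂) * u = β₁ * a₁ * β₂⁻¹ := by
  constructor <;> intro h
  · calc u⁻¹ * (α₁⁻¹ * a₂ * α₂) * u = u⁻¹ * α₁⁻¹ * (a₂ * (α₂ * u * β₂)) * β₂⁻¹ := by group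
      _ = β₁ * a₁ * β₂⁻¹ := by rw [← h]; group
  · calc α₁ * u * β₁ * a₁ = α₁ * u * (β₁ * a₁ * β₂⁻¹) * β₂ := by group
      _ = a₂ * (α₂ * u * β₂) := by rw [← h]; group

theorem exists_fin_transversal {α : Type*} [Finite α] (r : α → α → Prop) :
    ∃ (m : ℕ) (cl : α → Fin m) (rep : Fin m → α), Function.LeftInverse cl rep ∧
      (∀ x y, r x y → cl x = cl y) ∧ ∀ x, Relation.EqvGen r x (rep (cl x)) := by
  let s := Relation.EqvGen.setoid r
  obtain ⟨m, ⟨ε⟩⟩ := Finite.exists_equiv_fin (Quotient s)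
  refine ⟨m, fun x => ε ⟦x⟧, fun i => (ε.symm i).out, fun i => by simp, ?_, fun x => ?_⟩
  · exact fun x y hxy => congrArg ε (Quotient.sound (Relation.EqvGen.rel x y hxy))
  · exact Quotient.exact (s := s) (by simp)

def conjLinked {H 𝒵 : Type*} (R : Set (𝒵 × H × H × 𝒵)) (Z Z' : 𝒵) : Prop :=
  ∃ a₁ a₂, (Z, a₁, a₂, Z') ∈ R

theorem exists_eq_mul_mul_of_eqvGen_conjLinked {H M 𝒵 : Type*} [Group H] [Group M]
    {R : Set (𝒵 × H × H × 𝒵)} (z : 𝒵 → M) (g : H →* M)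
    (hz : ∀ t ∈ R, z t.1 * g t.2.1 = g t.2.2.1 * z t.2.2.2) {Z Z' : 𝒵}
    (h : Relation.EqvGen (conjLinked R) Z Z') : ∃ a b, z Z = g a * z Z' * g b := by
  induction h with
  | rel Z Z' hZ =>
    obtain ⟨a₁, a₂, ht⟩ := hZ
    exact ⟨a₂, a₁⁻¹, by rw [map_inv, eq_mul_inv_iff_mul_eq]; exact hz _ ht⟩
  | refl Z => exact ⟨1, 1, by simp⟩
  | symm Z Z' _ ih =>
    obtain ⟨a, b, h⟩ := ih
    exact ⟨a⁻¹, b⁻¹, by rw [h]; simp [mul_assoc]⟩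
  | trans Z Z' Z'' _ _ ih₁ ih₂ =>
    obtain ⟨a, b, h₁⟩ := ih₁
    obtain ⟨c, d, h₂⟩ := ih₂
    exact ⟨a * c, d * b, by rw [h₁, h₂]; simp [mul_assoc]⟩

section PartialConj

variable {H G : Type*} [Group H] [Group G] (f : H →* G)

def conjDomain (t : G) : Subgroup H :=
  f.range.comap ((MulAut.conj t⁻¹).toMonoidHom.comp f)

theorem mem_conjDomain {t : G} {x : H} : x ∈ conjDomain f t ↔ ∃ y, f y = t⁻¹ * f x * t := by
  simp [conjDomain]

variable {f} (hf : Function.Injective f) (t : G)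

noncomputable def conjHom : conjDomain f t →* H :=
  ((MonoidHom.ofInjective hf).symm : f.range →* H).comp
    ((((MulAut.conj t⁻¹).toMonoidHom.comp f).comp (conjDomain f t).subtype).codRestrict f.range
      fun x => x.2)

theorem map_conjHom (x : conjDomain f t) : f (conjHom hf t x) = t⁻¹ * f x * t := by
  simp [conjHom]

theorem conjHom_injective : Function.Injective (conjHom hf t) := fun x y hxy => by
  have h := congrArg f hxy
  rw [map_conjHom, map_conjHom, mul_left_inj, mul_right_inj] at h
  exact Subtype.ext (hf h)

noncomputable def conjEquiv : conjDomain f t ≃* (conjHom hf t).range :=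
  MonoidHom.ofInjective (conjHom_injective hf t)

theorem map_conjEquiv (x : conjDomain f t) :
    f (conjEquiv hf t x : H) = t⁻¹ * f x * t := by
  rw [conjEquiv, MonoidHom.ofInjective_apply, map_conjHom]

end PartialConj

namespace MHNN

variable {H : Type*} [Group H] {ι : Type*} {A B : ι → Subgroup H} {φ : ∀ i, A i ≃* B i}

theorem mk_eq_one_of_mem {r : FreeGroup (H ⊕ ι)} (hr : r ∈ hnnRels A B φ) :
    PresentedGroup.mk (hnnRels A B φ) r = 1 :=
  (QuotientGroup.eq_one_iff _).mpr (Subgroup.subset_normalClosure hr)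

variable (A B φ) in
def of : H →* MHNN A B φ :=
  MonoidHom.mk' (fun h => gen A B φ (Sum.inl h)) fun h₁ h₂ => by
    have h := mk_eq_one_of_mem (φ := φ) (Or.inl ⟨h₁, h₂, rfl⟩)
    simp only [map_mul, map_inv] at h
    exact (mul_inv_eq_one.mp h).symm

theorem inv_gen_inr_mul_of_mul_gen_inr (i : ι) (a : A i) :
    (gen A B φ (Sum.inr i))⁻¹ * of A B φ a * gen A B φ (Sum.inr i) = of A B φ (φ i a) := by
  have h := mk_eq_one_of_mem (φ := φ) (Or.inr ⟨i, a, rfl⟩)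
  simp only [map_mul, map_inv] at h
  exact mul_inv_eq_one.mp h

variable {G : Type*} [Group G]

def lift (f : H →* G) (t : ι → G) (h : ∀ i (a : A i), (t i)⁻¹ * f a * t i = f (φ i a)) :
    MHNN A B φ →* G :=
  PresentedGroup.toGroup (f := Sum.elim f t) <| by
    rintro r (⟨h₁, h₂, rfl⟩ | ⟨i, a, rfl⟩) <;>
      simp [h]

variable {f : H →* G} {t : ι → G} {h : ∀ i (a : A i), (t i)⁻¹ * f a * t i = f (φ i a)}

@[simp]
theorem lift_of (x : H) : lift f t h (of A B φ x) = f x :=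
  PresentedGroup.toGroup.of _

@[simp]
theorem lift_stable (i : ι) : lift f t h (gen A B φ (Sum.inr i)) = t i :=
  PresentedGroup.toGroup.of _

end MHNN

section

variable {L : Type*} [Group L] {A₁ : Subgroup L} {𝒵 : Type*}

variable (L A₁ 𝒵) in
abbrev ConjPresentation (R : Set (𝒵 × A₁ × A₁ × 𝒵)) :=
  Monoid.Coprod (FreeGroup 𝒵) A₁ ⧸ Subgroup.normalClosure (conjRels L A₁ 𝒵 R)

namespace ConjPresentation

variable (R : Set (𝒵 × A₁ × A₁ × 𝒵))

def mk : Monoid.Coprod (FreeGroup 𝒵) A₁ →* ConjPresentation L A₁ 𝒵 R :=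
  QuotientGroup.mk' _

def letter (Z : 𝒵) : ConjPresentation L A₁ 𝒵 R :=
  mk R (Monoid.Coprod.inl (FreeGroup.of Z))

def inr : A₁ →* ConjPresentation L A₁ 𝒵 R :=
  (mk R).comp Monoid.Coprod.inr

variable {R}

theorem letter_mul_inr {t : 𝒵 × A₁ × A₁ × 𝒵} (ht : t ∈ R) :
    letter R t.1 * inr R t.2.1 = inr R t.2.2.1 * letter R t.2.2.2 := by
  have h : mk R (Monoid.Coprod.inl (FreeGroup.of t.1) * Monoid.Coprod.inr t.2.1 *
      (Monoid.Coprod.inr t.2.2.1 * Monoid.Coprod.inl (FreeGroup.of t.2.2.2))⁻¹) = 1 :=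
    (QuotientGroup.eq_one_iff _).mpr (Subgroup.subset_normalClosure ⟨t, ht, rfl⟩)
  rw [map_mul, map_inv, mul_inv_eq_one, map_mul, map_mul] at h
  exact h

theorem hom_ext {M : Type*} [Group M] {f g : ConjPresentation L A₁ 𝒵 R →* M}
    (hletter : ∀ Z, f (letter R Z) = g (letter R Z)) (hinr : ∀ a, f (inr R a) = g (inr R a)) :
    f = g :=
  QuotientGroup.monoidHom_ext _ <| Monoid.Coprod.hom_ext (FreeGroup.ext_hom _ _ hletter)
    (MonoidHom.ext hinr)

variable {M : Type*} [Group M] (z : 𝒵 → M) (g : A₁ →* M)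
  (hz : ∀ t ∈ R, z t.1 * g t.2.1 = g t.2.2.1 * z t.2.2.2)

def lift : ConjPresentation L A₁ 𝒵 R →* M :=
  QuotientGroup.lift _ (Monoid.Coprod.lift (FreeGroup.lift z) g) <|
    Subgroup.normalClosure_le_normal <| by
      rintro _ ⟨t, ht, rfl⟩
      simp [hz t ht]

@[simp]
theorem lift_letter (Z : 𝒵) : lift z g hz (letter R Z) = z Z := by
  simp [lift, letter, mk]

@[simp]
theorem lift_inr (a : A₁) : lift z g hz (inr R a) = g a := by
  simp [lift, inr, mk]

theorem inr_injective (val : 𝒵 → L)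
    (hvalid : ∀ t ∈ R, val t.1 * (t.2.1 : L) = (t.2.2.1 : L) * val t.2.2.2) :
    Function.Injective (inr R) := by
  refine Function.Injective.of_comp (f := lift val A₁.subtype hvalid) ?_
  rw [show ⇑(lift val A₁.subtype hvalid) ∘ inr R = A₁.subtype from funext (lift_inr _ _ _)]
  exact A₁.subtype_injective

variable (hinj : Function.Injective (inr R)) {ι : Type*}
  (rep : ι → 𝒵)

abbrev StableHNN :=
  MHNN (fun i => conjDomain (inr R) (letter R (rep i)))
    (fun i => (conjHom hinj (letter R (rep i))).range) fun i => conjEquiv hinj (letter R (rep i))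

noncomputable def ofStableHNN : StableHNN hinj rep →* ConjPresentation L A₁ 𝒵 R :=
  MHNN.lift (inr R) (fun i => letter R (rep i)) fun _ a => (map_conjEquiv hinj _ a).symm

variable {hinj rep} {cl : 𝒵 → ι} {α β : 𝒵 → A₁}

theorem inv_letter_mul_inr_mul_letter (hR : ∀ t ∈ R, cl t.1 = cl t.2.2.2)
    (hdec : ∀ Z, letter R Z = inr R (α Z) * letter R (rep (cl Z)) * inr R (β Z))
    {t : 𝒵 × A₁ × A₁ × 𝒵} (ht : t ∈ R) :
    (letter R (rep (cl t.1)))⁻¹ * inr R ((α t.1)⁻¹ * t.2.2.1 * α t.2.2.2) *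
        letter R (rep (cl t.1)) =
      inr R (β t.1 * t.2.1 * (β t.2.2.2)⁻¹) := by
  have h := letter_mul_inr ht
  rw [hdec t.1, hdec t.2.2.2, ← hR t ht, mul_mul_eq_mul_mul_iff_conj] at h
  simpa only [map_mul, map_inv] using h

variable (hR : ∀ t ∈ R, cl t.1 = cl t.2.2.2)
  (hdec : ∀ Z, letter R Z = inr R (α Z) * letter R (rep (cl Z)) * inr R (β Z))

variable (hinj) in
noncomputable def toStableHNN :
    ConjPresentation L A₁ 𝒵 R →* StableHNN hinj rep :=
  lift (fun Z => MHNN.of _ _ _ (α Z) * gen _ _ _ (Sum.inr (cl Z)) * MHNN.of _ _ _ (β Z))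
    (MHNN.of _ _ _) fun t ht => by
      have hconj := inv_letter_mul_inr_mul_letter hR hdec ht
      have hd : (α t.1)⁻¹ * t.2.2.1 * α t.2.2.2 ∈ conjDomain (inr R) (letter R (rep (cl t.1))) :=
        (mem_conjDomain _).mpr ⟨_, hconj.symm⟩
      have hψ : (conjEquiv hinj _ ⟨_, hd⟩ : A₁) = β t.1 * t.2.1 * (β t.2.2.2)⁻¹ :=
        hinj (by rw [map_conjEquiv]; exact hconj)
      have h := MHNN.inv_gen_inr_mul_of_mul_gen_inr (φ := fun i => conjEquiv hinj (letter R (rep i)))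
        (cl t.1) ⟨_, hd⟩
      simp only [hψ, map_mul, map_inv] at h
      rw [← hR t ht, mul_mul_eq_mul_mul_iff_conj]
      exact h

theorem toStableHNN_inr (a : A₁) : toStableHNN hinj hR hdec (inr R a) = gen _ _ _ (Sum.inl a) :=
  lift_inr _ _ _ a

theorem ofStableHNN_comp_toStableHNN :
    (ofStableHNN hinj rep).comp (toStableHNN hinj hR hdec) = MonoidHom.id _ :=
  hom_ext (fun Z => by simp [toStableHNN, ofStableHNN, ← hdec]) fun a => by
    simp [toStableHNN, ofStableHNN]

theorem toStableHNN_surjective (hcl : Function.LeftInverse cl rep) :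
    Function.Surjective (toStableHNN hinj hR hdec) := by
  rw [← MonoidHom.range_eq_top, eq_top_iff, ← PresentedGroup.closure_range_of,
    Subgroup.closure_le]
  rintro _ ⟨a | i, rfl⟩
  · exact ⟨inr R a, toStableHNN_inr hR hdec a⟩
  · refine ⟨inr R (α (rep i))⁻¹ * letter R (rep i) * inr R (β (rep i))⁻¹, ?_⟩
    change _ = gen _ _ _ (Sum.inr i)
    simp only [map_mul, map_inv, toStableHNN, lift_letter, lift_inr, hcl i]
    group

noncomputable def equivStableHNN (hcl : Function.LeftInverse cl rep) :
    ConjPresentation L A₁ 𝒵 R ≃* StableHNN hinj rep :=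
  MulEquiv.ofBijective (toStableHNN hinj hR hdec)
    ⟨Function.LeftInverse.injective (g := ofStableHNN hinj rep)
      (DFunLike.congr_fun (ofStableHNN_comp_toStableHNN hR hdec)),
      toStableHNN_surjective hR hdec hcl⟩

end ConjPresentation

end

section

variable (L : Type*) [Group L] (A₁ : Subgroup L) [Finite A₁]
variable (𝒵 : Type*) [Finite 𝒵]

/-- If every relation in `R` has conjugation type `Z₁ a₁ = a₂ Z₂` and the
relations are valid in an overgroup `L ⊇ A₁` via `val : 𝒵 → L`, then the presented group
`⟨F(𝒵) ∗ A₁ | R⟩` is isomorphic, via an isomorphism restricting to the identity on `A₁`,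
to a multiple HNN-extension `⟨A₁, Z₁, …, Zₘ | Zᵢ⁻¹ a Zᵢ = ψᵢ(a) (a ∈ dom ψᵢ)⟩` of the
finite group `A₁`, where each `ψᵢ` is a partial automorphism of `A₁` (an isomorphism
`ψᵢ : Cᵢ ≃* Dᵢ` between subgroups `Cᵢ, Dᵢ` of `A₁`). -/
theorem conj_type_presentation_iso_hnn
    (R : Set (𝒵 × A₁ × A₁ × 𝒵)) (val : 𝒵 → L)
    (hvalid : ∀ t ∈ R, val t.1 * (t.2.1 : L) = (t.2.2.1 : L) * val t.2.2.2) :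
    ∃ (m : ℕ) (C D : Fin m → Subgroup A₁) (ψ : ∀ i, C i ≃* D i)
      (e : (Monoid.Coprod (FreeGroup 𝒵) A₁ ⧸
          Subgroup.normalClosure (conjRels L A₁ 𝒵 R)) ≃* MHNN C D ψ),
      ∀ a : A₁,
        e (QuotientGroup.mk' (Subgroup.normalClosure (conjRels L A₁ 𝒵 R))
            (Monoid.Coprod.inr a)) = gen C D ψ (Sum.inl a) := by
  obtain ⟨m, cl, rep, hcl, hlinked, hrep⟩ := exists_fin_transversal (conjLinked R)
  have hR : ∀ t ∈ R, cl t.1 = cl t.2.2.2 := fun t ht => hlinked _ _ ⟨_, _, ht⟩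
  have hdec (Z : 𝒵) : ∃ a b, ConjPresentation.letter R Z =
      ConjPresentation.inr R a * ConjPresentation.letter R (rep (cl Z)) *
        ConjPresentation.inr R b :=
    exists_eq_mul_mul_of_eqvGen_conjLinked _ _ (fun _ => ConjPresentation.letter_mul_inr)
      (hrep Z)
  choose α β hdec using hdec
  have hinj := ConjPresentation.inr_injective val hvalid
  exact ⟨m, _, _, _, ConjPresentation.equivStableHNN (hinj := hinj) hR hdec hcl,
    ConjPresentation.toStableHNN_inr hR hdec⟩

end
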